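/- For every integer p ≥ 2, the density f_p(x) = (2^{p-1}√(2π))⁻¹ ∫_{‖x‖_∞}^∞ y^{2-p} e^{-y²/2} dy on ℝ^p has standard normal marginals: integrating out x_p over ℝ yields f_{p-1}(x₁,…,x_{p-1}), and f₁(x₁) = (2π)^{-1/2} e^{-x₁²/2}. -/

import Mathlib

open MeasureTheory

/-- The Khintchine mixture density in `p` dimensions; `‖x‖` on `Fin p → ℝ` is the sup norm. -/
noncomputable def khintchineDensity (p : ℕ) (x : Fin p → ℝ) : ℝ :=
  ((2 : ℝ) ^ ((p : ℝ) - 1) * Real.sqrt (2 * Real.pi))⁻¹ *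
    ∫ y in Set.Ioi ‖x‖, y ^ ((2 : ℝ) - (p : ℝ)) * Real.exp (-y ^ 2 / 2)

/-!
Write `f_p(x) = c_p G_{2-p}(‖x‖)` with `G_s(a) = ∫_a^∞ y^s e^{-y²/2} dy`. Since
`‖(x, t)‖ = max ‖x‖ |t|`, Tonelli gives
`∫ G_s(max a |t|) dt = ∫_a^∞ λ{t : |t| < y} y^s e^{-y²/2} dy = 2 G_{s+1}(a)`,
and `2 c_{p+1} = c_p`. The tails `G_s(m)` are finite for `m > 0`, hence for all `t ≠ 0`, which
justifies passing between Bochner and Lebesgue integrals for every exponent `s`.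
Finally `G_1(a) = e^{-a²/2}` gives `f_1`.
-/

open Set Real
open scoped ENNReal

theorem Pi.norm_snoc {E : Type*} [SeminormedAddCommGroup E] {n : ℕ} (x : Fin n → E) (t : E) :
    ‖(Fin.snoc x t : Fin (n + 1) → E)‖ = max ‖x‖ ‖t‖ := by
  rw [Pi.norm_def, Pi.norm_def, Fin.univ_castSuccEmb, Finset.sup_cons, Finset.sup_map]
  simp [Function.comp_def, sup_comm]

theorem lintegral_setLIntegral_Ioi_max_abs {F : ℝ → ℝ≥0∞} (hF : Measurable F) (a : ℝ) :
    ∫⁻ t, ∫⁻ y in Ioi (max a |t|), F y = ∫⁻ y in Ioi a, ENNReal.ofReal (2 * y) * F y := by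
  have hslice (y t : ℝ) : (Ioi (max a |t|)).indicator F y =
      (Ioo (-y) y).indicator (fun _ ↦ (Ioi a).indicator F y) t := by
    by_cases hy : a < y <;> by_cases ht : |t| < y
      <;> simp [indicator, hy, ht, ← abs_lt]
  have hmeas : Measurable (Function.uncurry fun t y ↦ (Ioi (max a |t|)).indicator F y) :=
    (hF.comp measurable_snd).indicator (measurableSet_lt (by fun_prop) measurable_snd)
  calc ∫⁻ t, ∫⁻ y in Ioi (max a |t|), F y
      = ∫⁻ y, ∫⁻ t, (Ioi (max a |t|)).indicator F y := by
        simp_rw [← lintegral_indicator measurableSet_Ioi]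
        exact lintegral_lintegral_swap hmeas.aemeasurable
    _ = ∫⁻ y in Ioi a, ENNReal.ofReal (2 * y) * F y := by
        rw [← lintegral_indicator measurableSet_Ioi]
        refine lintegral_congr fun y ↦ ?_
        simp_rw [hslice y, lintegral_indicator_const measurableSet_Ioo, volume_Ioo]
        by_cases hy : a < y <;> simp [hy, mul_comm, mul_two]

noncomputable def gaussianTail (s a : ℝ) : ℝ :=
  ∫ y in Ioi a, y ^ s * exp (-y ^ 2 / 2)

theorem khintchineDensity_eq_gaussianTail (p : ℕ) (x : Fin p → ℝ) :
    khintchineDensity p x = ((2 : ℝ) ^ ((p : ℝ) - 1) * √(2 * π))⁻¹ * gaussianTail (2 - p) ‖x‖ :=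
  rfl

theorem integrableOn_Ioi_rpow_mul_exp_neg_sq_div_two (s : ℝ) {m : ℝ} (hm : 0 < m) :
    IntegrableOn (fun y : ℝ ↦ y ^ s * exp (-y ^ 2 / 2)) (Ioi m) := by
  refine integrable_of_isBigO_exp_neg (b := 1 / 2) (by norm_num) (fun y hy ↦ ?_) ?_
  · exact ((continuousAt_rpow_const _ _ (Or.inl (hm.trans_le hy).ne')).mul
      (by fun_prop)).continuousWithinAt
  · convert (rpow_mul_exp_neg_mul_sq_isLittleO_exp_neg (b := 1 / 2) (by norm_num) s).isBigO
      using 4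
    ring

theorem gaussianTail_eq_toReal_lintegral (s : ℝ) {a : ℝ} (ha : 0 ≤ a) :
    gaussianTail s a = (∫⁻ y in Ioi a, ENNReal.ofReal (y ^ s * exp (-y ^ 2 / 2))).toReal :=
  integral_eq_lintegral_of_nonneg_ae
    ((ae_restrict_iff' measurableSet_Ioi).2 <| ae_of_all _ fun y hy ↦
      mul_nonneg (rpow_nonneg (ha.trans hy.le) s) (exp_pos _).le)
    (by fun_prop : Measurable fun y : ℝ ↦ y ^ s * exp (-y ^ 2 / 2)).aestronglyMeasurable

theorem integral_gaussianTail_max_abs (s : ℝ) {a : ℝ} (ha : 0 ≤ a) :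
    ∫ t, gaussianTail s (max a |t|) = 2 * gaussianTail (s + 1) a := by
  set F : ℝ → ℝ≥0∞ := fun y ↦ ENNReal.ofReal (y ^ s * exp (-y ^ 2 / 2))
  have hF : Measurable F := by fun_prop
  have htail_anti : Antitone fun m ↦ ∫⁻ y in Ioi m, F y := fun m m' h ↦
    lintegral_mono_set (Ioi_subset_Ioi h)
  have htail_fin : ∀ᵐ t : ℝ, ∫⁻ y in Ioi (max a |t|), F y < ∞ := by
    filter_upwards [volume.ae_ne 0] with t ht
    exact (integrableOn_Ioi_rpow_mul_exp_neg_sq_div_two s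
      (lt_max_of_lt_right (abs_pos.2 ht))).lintegral_lt_top
  have hmul : ∀ y ∈ Ioi a, ENNReal.ofReal (2 * y) * F y =
      2 * ENNReal.ofReal (y ^ (s + 1) * exp (-y ^ 2 / 2)) := fun y hy ↦ by
    have hy : 0 < y := ha.trans_lt hy
    rw [rpow_add_one hy.ne', ← ENNReal.ofReal_ofNat 2, ← ENNReal.ofReal_mul (by positivity),
      ← ENNReal.ofReal_mul (by norm_num)]
    ring_nf
  calc ∫ t, gaussianTail s (max a |t|)
      = ∫ t, (∫⁻ y in Ioi (max a |t|), F y).toReal :=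
        integral_congr_ae <| ae_of_all _ fun t ↦
          gaussianTail_eq_toReal_lintegral s (ha.trans (le_max_left _ _))
    _ = (∫⁻ t, ∫⁻ y in Ioi (max a |t|), F y).toReal :=
        integral_toReal (htail_anti.measurable.comp (by fun_prop)).aemeasurable htail_fin
    _ = (2 * ∫⁻ y in Ioi a, ENNReal.ofReal (y ^ (s + 1) * exp (-y ^ 2 / 2))).toReal := by
        rw [lintegral_setLIntegral_Ioi_max_abs hF, setLIntegral_congr_fun measurableSet_Ioi hmul,
          lintegral_const_mul _ (by fun_prop)]
    _ = 2 * gaussianTail (s + 1) a := by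
        rw [ENNReal.toReal_mul, gaussianTail_eq_toReal_lintegral _ ha, ENNReal.toReal_ofNat]

theorem gaussianTail_one {a : ℝ} (ha : 0 ≤ a) : gaussianTail 1 a = exp (-a ^ 2 / 2) := by
  have hderiv (y : ℝ) : HasDerivAt (fun y ↦ -exp (-y ^ 2 / 2)) (y * exp (-y ^ 2 / 2)) y := by
    have h : HasDerivAt (fun y : ℝ ↦ -y ^ 2 / 2) (-y) y :=
      ((hasDerivAt_pow 2 y).neg.div_const 2).congr_deriv (by ring)
    exact h.exp.neg.congr_deriv (by ring)
  have hlim : Filter.Tendsto (fun y : ℝ ↦ -exp (-y ^ 2 / 2)) Filter.atTop (nhds 0) := by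
    have := (Filter.tendsto_neg_atTop_atBot.comp
      (Filter.tendsto_pow_atTop two_ne_zero)).atBot_div_const (two_pos : (0 : ℝ) < 2)
    simpa using (tendsto_exp_atBot.comp this).neg
  simpa [gaussianTail] using integral_Ioi_of_hasDerivAt_of_nonneg' (fun y _ ↦ hderiv y)
    (fun y hy ↦ mul_nonneg (ha.trans hy.le) (exp_pos _).le) hlim

theorem khintchine_density_marginals_general (q : ℕ) :
    (∀ x : Fin q → ℝ,
        (∫ t : ℝ, khintchineDensity (q + 1) (Fin.snoc x t)) = khintchineDensity q x) ∧
    (∀ x : Fin 1 → ℝ,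
        khintchineDensity 1 x = (Real.sqrt (2 * Real.pi))⁻¹ * Real.exp (-(x 0) ^ 2 / 2)) := by
  refine ⟨fun x ↦ ?_, fun x ↦ ?_⟩
  · have hs : (2 : ℝ) - (q + 1 : ℕ) + 1 = 2 - q := by push_cast; ring
    simp_rw [khintchineDensity_eq_gaussianTail, Pi.norm_snoc, Real.norm_eq_abs,
      integral_const_mul, integral_gaussianTail_max_abs _ (norm_nonneg x), hs, Nat.cast_succ,
      add_sub_cancel_right, rpow_sub_one two_ne_zero]
    field_simp
  · have hx : ‖x‖ = |x 0| := by
      rw [show x = fun _ ↦ x 0 from funext fun i ↦ by rw [Subsingleton.elim i 0], pi_norm_const,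
        Real.norm_eq_abs]
    rw [khintchineDensity_eq_gaussianTail, hx, Nat.cast_one, sub_self, rpow_zero, one_mul,
      show (2 : ℝ) - 1 = 1 by norm_num, gaussianTail_one (abs_nonneg _), sq_abs]

/-- Integrating out the last coordinate of `f_p` gives `f_{p-1}` (stated with `p = q + 1`),
and `f₁` is the standard normal density. -/
theorem khintchine_density_marginals (q : ℕ) (hq : 1 ≤ q) :
    (∀ x : Fin q → ℝ,
        (∫ t : ℝ, khintchineDensity (q + 1) (Fin.snoc x t)) = khintchineDensity q x) ∧
    (∀ x : Fin 1 → ℝ,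
        khintchineDensity 1 x = (Real.sqrt (2 * Real.pi))⁻¹ * Real.exp (-(x 0) ^ 2 / 2)) :=
  khintchine_density_marginals_general q
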